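/- arXiv:2207.03982 — 7 statements merged into one kernel-verified Lean document; each statement's English description precedes it below -/
import Mathlib

section
/- Let p_1,...,p_m, q be in the open unit disk with d̂ = max_i |p_i - q| < 1. Then ∑_{k=1}^m ∑_{S ⊆ I_m, |S|=k} ∑_{i=1}^k ∑_{T ⊆ S, |T|=i} |q|^{k-i} ∏_{j∈T} |p_j - q| ≤ ((|q|+2)^m - (|q|+1)^m) · d̂. -/
/-!
Every product `∏ j ∈ T, ‖p j - q‖` has at least one factor and all its factors lie in
`[0, d̂]` with `d̂ ≤ 1`, so it is at most `d̂`. What remains is a count: with `a = ‖q‖`,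
the binomial theorem turns `∑ᵢ C(k, i) a^(k-i)` (over `i ≥ 1`) into `(a + 1)^k - a^k`,
and then `∑ₖ C(m, k) ((a + 1)^k - a^k)` into `(a + 2)^m - (a + 1)^m`.
-/

open Finset

lemma sum_Icc_one_eq_sum_range_sub {M : Type*} [AddCommGroup M] (f : ℕ → M) (n : ℕ) :
    ∑ i ∈ Icc 1 n, f i = ∑ i ∈ range (n + 1), f i - f 0 := by
  rw [range_eq_Ico, sum_eq_sum_Ico_succ_bot (by omega : 0 < n + 1), zero_add,
    Ico_add_one_right_eq_Icc]
  abel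

lemma sum_Icc_one_choose_mul_pow_sub {R : Type*} [CommRing R] (x : R) (n : ℕ) :
    ∑ i ∈ Icc 1 n, (n.choose i : R) * x ^ (n - i) = (x + 1) ^ n - x ^ n := by
  rw [sum_Icc_one_eq_sum_range_sub, add_comm x, add_pow]
  simp [mul_comm]

lemma sum_Icc_one_choose_mul_add_one_pow_sub_pow {R : Type*} [CommRing R] (x : R) (n : ℕ) :
    ∑ k ∈ Icc 1 n, (n.choose k : R) * ((x + 1) ^ k - x ^ k) = (x + 2) ^ n - (x + 1) ^ n := by
  have binomial (y : R) : ∑ k ∈ range (n + 1), (n.choose k : R) * y ^ k = (y + 1) ^ n := by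
    rw [add_pow]
    simp [mul_comm]
  rw [sum_Icc_one_eq_sum_range_sub]
  simp only [pow_zero, sub_self, mul_zero, sub_zero, mul_sub, sum_sub_distrib, binomial]
  ring

lemma prod_le_of_nonempty_of_le_one {ι R : Type*} [CommSemiring R] [PartialOrder R]
    [IsOrderedRing R] {s : Finset ι} {f : ι → R} {d : R}
    (hs : s.Nonempty) (hf0 : ∀ i ∈ s, 0 ≤ f i) (hfd : ∀ i ∈ s, f i ≤ d) (hd : d ≤ 1) :
    ∏ i ∈ s, f i ≤ d := by
  obtain ⟨i, hi⟩ := hs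
  calc ∏ i ∈ s, f i ≤ ∏ _i ∈ s, d := prod_le_prod hf0 hfd
    _ = d ^ #s := prod_const d
    _ ≤ d ^ 1 := pow_le_pow_of_le_one ((hf0 i hi).trans (hfd i hi)) hd (card_pos.2 ⟨i, hi⟩)
    _ = d := pow_one d

lemma sum_Icc_powersetCard_sum_Icc_powersetCard_pow_mul {ι R : Type*} [CommRing R]
    (s : Finset ι) (a c : R) :
    ∑ k ∈ Icc 1 #s, ∑ S ∈ powersetCard k s, ∑ i ∈ Icc 1 k, ∑ _T ∈ powersetCard i S,
      a ^ (k - i) * c = ((a + 2) ^ #s - (a + 1) ^ #s) * c := by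
  have inner (k : ℕ) (S : Finset ι) (hS : S ∈ powersetCard k s) :
      ∑ i ∈ Icc 1 k, ∑ _T ∈ powersetCard i S, a ^ (k - i) * c =
        ((a + 1) ^ k - a ^ k) * c := by
    simp only [sum_const, card_powersetCard, (mem_powersetCard.1 hS).2, nsmul_eq_mul, ← mul_assoc]
    rw [← sum_mul, sum_Icc_one_choose_mul_pow_sub]
  calc _ = ∑ k ∈ Icc 1 #s, ((#s).choose k : R) * ((a + 1) ^ k - a ^ k) * c := by
        refine sum_congr rfl fun k _ ↦ ?_
        rw [sum_congr rfl (inner k), sum_const, card_powersetCard, nsmul_eq_mul, mul_assoc]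
    _ = _ := by rw [← sum_mul, sum_Icc_one_choose_mul_add_one_pow_sub_pow]

theorem quadruple_sum_bound_general (m : ℕ) (p : Fin m → ℂ) (q : ℂ) (d : ℝ)
    (hd : IsGreatest (Set.range fun i => ‖p i - q‖) d) (hd1 : d < 1) :
    ∑ k ∈ Finset.Icc 1 m, ∑ S ∈ Finset.powersetCard k (Finset.univ : Finset (Fin m)),
      ∑ i ∈ Finset.Icc 1 k, ∑ T ∈ Finset.powersetCard i S,
        ‖q‖ ^ (k - i) * ∏ j ∈ T, ‖p j - q‖
      ≤ ((‖q‖ + 2) ^ m - (‖q‖ + 1) ^ m) * d := by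
  calc _ ≤ ∑ k ∈ Icc 1 m, ∑ S ∈ powersetCard k (univ : Finset (Fin m)),
        ∑ i ∈ Icc 1 k, ∑ _T ∈ powersetCard i S, ‖q‖ ^ (k - i) * d := by
        gcongr with k _ S _ i hi T hT
        have hTne : T.Nonempty := card_pos.1 <| (mem_powersetCard.1 hT).2 ▸ (mem_Icc.1 hi).1
        exact prod_le_of_nonempty_of_le_one hTne (fun _ _ ↦ norm_nonneg _)
          (fun j _ ↦ hd.2 ⟨j, rfl⟩) hd1.le
    _ = _ := by
        simpa using
          sum_Icc_powersetCard_sum_Icc_powersetCard_pow_mul (univ : Finset (Fin m)) ‖q‖ d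

/-- the quadruple sum is bounded by `((|q|+2)^m - (|q|+1)^m) * d̂`
where `d̂ = max_i |p i - q| < 1`. -/
theorem quadruple_sum_bound (m : ℕ) (hm : 0 < m) (p : Fin m → ℂ) (q : ℂ) (d : ℝ)
    (hp : ∀ i, ‖p i‖ < 1) (hq : ‖q‖ < 1)
    (hd : IsGreatest (Set.range fun i => ‖p i - q‖) d) (hd1 : d < 1) :
    ∑ k ∈ Finset.Icc 1 m, ∑ S ∈ Finset.powersetCard k (Finset.univ : Finset (Fin m)),
      ∑ i ∈ Finset.Icc 1 k, ∑ T ∈ Finset.powersetCard i S,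
        ‖q‖ ^ (k - i) * ∏ j ∈ T, ‖p j - q‖
      ≤ ((‖q‖ + 2) ^ m - (‖q‖ + 1) ^ m) * d :=
  quadruple_sum_bound_general m p q d hd hd1
end

section
/- Let p_1,...,p_m be pairwise distinct, lying in the closed ball of radius r centered at 0 with 0 < r < 1, let q be in the open unit disk, and suppose d̂ = max_i |p_i - q| < 1. Then with c_i = 1/∏_{j≠i}(p_i - p_j), for every z on the unit circle, |∑_{i=1}^m c_i/(z - p_i) - 1/(z-q)^m| ≤ ((|q|+2)^m - (|q|+1)^m)/(d(q, ∂𝔻)^m (1-r)^m) · d̂, where d(q, ∂𝔻) = 1 - |q| is the distance from q to the unit circle. -/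
/-!
By partial fractions the sum equals `1 / ∏ i, (z - p i)`, so the error is
`((z - q) ^ m - ∏ i, (z - p i)) / ((z - q) ^ m * ∏ i, (z - p i))`. On the unit circle the
denominator is at least `(1 - ‖q‖) ^ m * (1 - r) ^ m`. The numerator telescopes: the factors
`z - q` and `z - p i` differ by at most `d` and are bounded by `‖q‖ + 1` and `‖q‖ + 2`, so it is
at most `d` times a two-variable geometric sum, which equals `(‖q‖ + 2) ^ m - (‖q‖ + 1) ^ m`
because the two bounds differ by `1`.
-/

open Finset

theorem norm_prod_sub_prod_le {ι R : Type*} [NormedCommRing R] [NormOneClass R]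
    (s : Finset ι) {f g : ι → R} {A B d : ℝ}
    (hf : ∀ i ∈ s, ‖f i‖ ≤ A) (hg : ∀ i ∈ s, ‖g i‖ ≤ B) (hfg : ∀ i ∈ s, ‖f i - g i‖ ≤ d) :
    ‖∏ i ∈ s, f i - ∏ i ∈ s, g i‖ ≤ d * ∑ i ∈ range #s, B ^ i * A ^ (#s - 1 - i) := by
  classical
  induction s using Finset.induction_on with
  | empty => simp
  | insert a s ha ih =>
    simp only [forall_mem_insert] at hf hg hfg
    have hA : 0 ≤ A := (norm_nonneg _).trans hf.1
    have hd : 0 ≤ d := (norm_nonneg _).trans hfg.1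
    have hg_prod : ‖∏ i ∈ s, g i‖ ≤ B ^ #s := calc
      ‖∏ i ∈ s, g i‖ ≤ ∏ i ∈ s, ‖g i‖ := norm_prod_le s g
      _ ≤ ∏ _i ∈ s, B := prod_le_prod (fun _ _ => norm_nonneg _) hg.2
      _ = B ^ #s := prod_const B
    have hsplit : ∏ i ∈ insert a s, f i - ∏ i ∈ insert a s, g i
        = f a * (∏ i ∈ s, f i - ∏ i ∈ s, g i) + (f a - g a) * ∏ i ∈ s, g i := by
      rw [prod_insert ha, prod_insert ha]; ring
    rw [hsplit, card_insert_of_notMem ha, Nat.add_sub_cancel, geom_sum₂_succ_eq]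
    calc _ ≤ ‖f a‖ * ‖∏ i ∈ s, f i - ∏ i ∈ s, g i‖ + ‖f a - g a‖ * ‖∏ i ∈ s, g i‖ :=
          (norm_add_le _ _).trans (add_le_add (norm_mul_le _ _) (norm_mul_le _ _))
      _ ≤ A * (d * ∑ i ∈ range #s, B ^ i * A ^ (#s - 1 - i)) + d * B ^ #s := by
          gcongr
          exacts [hf.1, ih hf.2 hg.2 hfg.2, hfg.1]
      _ = _ := by ring

theorem inv_prod_sub_eq_sum_div_sub {ι F : Type*} [Field F] [DecidableEq ι]
    {s : Finset ι} (hs : s.Nonempty) {v : ι → F} (hvs : Set.InjOn v s)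
    {z : F} (hz : ∀ i ∈ s, z ≠ v i) :
    (∏ i ∈ s, (z - v i))⁻¹ = ∑ i ∈ s, (∏ j ∈ s.erase i, (v i - v j))⁻¹ / (z - v i) := by
  have hbasis : ∑ i ∈ s, (∏ j ∈ s.erase i, (v i - v j))⁻¹ * ∏ j ∈ s.erase i, (z - v j) = 1 := by
    simpa [Lagrange.basis, Lagrange.basisDivisor, Polynomial.eval_finsetSum, Polynomial.eval_prod, prod_mul_distrib,
      prod_inv_distrib] using congrArg (Polynomial.eval z) (Lagrange.sum_basis hvs hs)
  rw [← mul_one (∏ i ∈ s, (z - v i))⁻¹, ← hbasis, mul_sum]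
  refine sum_congr rfl fun i hi => ?_
  rw [← mul_prod_erase s _ hi]
  have : ∏ j ∈ s.erase i, (z - v j) ≠ 0 :=
    prod_ne_zero_iff.mpr fun j hj => sub_ne_zero.mpr (hz j (mem_of_mem_erase hj))
  field_simp [sub_ne_zero.mpr (hz i hi)]

theorem norm_inv_sub_inv_le {K : Type*} [NormedField K] {x y : K} {a b : ℝ}
    (ha : 0 < a) (hb : 0 < b) (hx : a ≤ ‖x‖) (hy : b ≤ ‖y‖) :
    ‖x⁻¹ - y⁻¹‖ ≤ ‖y - x‖ / (a * b) := by
  rw [inv_sub_inv (norm_pos_iff.mp (ha.trans_le hx)) (norm_pos_iff.mp (hb.trans_le hy)),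
    norm_div, norm_mul]
  gcongr

theorem siso_simple_pole_approx_general (m : ℕ) (r : ℝ) (hr1 : r < 1)
    (p : Fin m → ℂ) (hp : Function.Injective p)
    (hpr : ∀ i, ‖p i‖ ≤ r)
    (q : ℂ) (hq : ‖q‖ < 1) (d : ℝ)
    (hd : IsGreatest (Set.range fun i => ‖p i - q‖) d)
    (z : ℂ) (hz : ‖z‖ = 1) :
    ‖∑ i, (∏ j ∈ Finset.univ.erase i, (p i - p j))⁻¹ / (z - p i)
        - 1 / (z - q) ^ m‖
      ≤ ((‖q‖ + 2) ^ m - (‖q‖ + 1) ^ m)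
          / ((1 - ‖q‖) ^ m * (1 - r) ^ m) * d := by
  obtain ⟨⟨i₀, -⟩, hd_max⟩ := hd
  have : Nonempty (Fin m) := ⟨i₀⟩
  have hdist (w : ℂ) : 1 - ‖w‖ ≤ ‖z - w‖ := hz ▸ norm_sub_norm_le z w
  have hz_ne (i : Fin m) : z ≠ p i := fun h => by linarith [hpr i, h ▸ hz]
  have hnum : ‖∏ _i : Fin m, (z - q) - ∏ i, (z - p i)‖
      ≤ d * ((‖q‖ + 2) ^ m - (‖q‖ + 1) ^ m) := by
    have hgeom := geom_sum₂_mul (‖q‖ + 2) (‖q‖ + 1) m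
    rw [show ‖q‖ + 2 - (‖q‖ + 1) = 1 by ring, mul_one] at hgeom
    have htele := norm_prod_sub_prod_le (univ : Finset (Fin m)) (A := ‖q‖ + 1) (B := ‖q‖ + 2)
      (f := fun _ => z - q) (g := fun i => z - p i) (d := d)
      (fun _ _ => by linarith [norm_sub_le z q])
      (fun i _ => by linarith [norm_sub_le z (p i), hpr i, norm_nonneg q])
      (fun i _ => by simpa [norm_sub_rev] using hd_max ⟨i, rfl⟩)
    rwa [card_univ, Fintype.card_fin, hgeom] at htele
  rw [← inv_prod_sub_eq_sum_div_sub univ_nonempty hp.injOn fun i _ => hz_ne i, one_div,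
    ← Fin.prod_const]
  calc _ ≤ ‖∏ _i : Fin m, (z - q) - ∏ i, (z - p i)‖ / ((1 - r) ^ m * (1 - ‖q‖) ^ m) := by
        refine norm_inv_sub_inv_le (by bound) (by bound) ?_ ?_
        · rw [norm_prod, ← Fin.prod_const]
          exact prod_le_prod (fun _ _ => by linarith) fun i _ => by linarith [hdist (p i), hpr i]
        · rw [norm_prod, ← Fin.prod_const]
          exact prod_le_prod (fun _ _ => by linarith) fun _ _ => hdist q
    _ ≤ d * ((‖q‖ + 2) ^ m - (‖q‖ + 1) ^ m) / ((1 - r) ^ m * (1 - ‖q‖) ^ m) := by gcongr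
    _ = _ := by ring

/-- SISO simple pole approximation error bound on the unit circle. -/
theorem siso_simple_pole_approx (m : ℕ) (hm : 0 < m) (r : ℝ) (hr0 : 0 < r) (hr1 : r < 1)
    (p : Fin m → ℂ) (hp : Function.Injective p)
    (hpr : ∀ i, ‖p i‖ ≤ r)
    (q : ℂ) (hq : ‖q‖ < 1) (d : ℝ)
    (hd : IsGreatest (Set.range fun i => ‖p i - q‖) d) (hd1 : d < 1)
    (z : ℂ) (hz : ‖z‖ = 1) :
    ‖∑ i, (∏ j ∈ Finset.univ.erase i, (p i - p j))⁻¹ / (z - p i)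
        - 1 / (z - q) ^ m‖
      ≤ ((‖q‖ + 2) ^ m - (‖q‖ + 1) ^ m)
          / ((1 - ‖q‖) ^ m * (1 - r) ^ m) * d :=
  siso_simple_pole_approx_general m r hr1 p hp hpr q hq d hd z hz
end

section
/- Define, for a positive even integer m and x ∈ [1, ∞), g(x) = (1/(m/2+1))·[2x+1 − 2√(x(x+1))·cos(2√π(√(x+1) − √x))]. Then lim_{x→∞} g(x) = π/(m/2+1). -/
open Filter Real Topology

private lemma sin_div_self_lim :
    Tendsto (fun t : ℝ => Real.sin t / t) (𝓝[≠] (0:ℝ)) (𝓝 1) := by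
  have h := Real.hasDerivAt_sin 0
  rw [hasDerivAt_iff_tendsto_slope] at h
  have h' : Tendsto (fun t : ℝ => Real.sin t / t) (𝓝[≠] (0:ℝ)) (𝓝 (Real.cos 0)) := by
    refine h.congr fun t => ?_
    rw [slope_def_field]
    simp
  simpa using h'

private lemma sqrt_tendsto_atTop : Tendsto Real.sqrt atTop atTop := by
  refine tendsto_atTop_atTop.2 fun b => ⟨(max b 0) ^ 2, fun x hx => ?_⟩
  calc b ≤ max b 0 := le_max_left _ _
    _ = Real.sqrt ((max b 0) ^ 2) := (Real.sqrt_sq (le_max_right _ _)).symm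
    _ ≤ Real.sqrt x := Real.sqrt_le_sqrt hx

set_option maxHeartbeats 1000000 in
/-- the limit of
`g(x) = (1/(m/2+1))·[2x+1 − 2√(x(x+1))·cos(2√π(√(x+1) − √x))]` as `x → ∞`
equals `π/(m/2+1)`. -/
theorem spiral_gap_limit (m : ℕ) (hm : 0 < m) (hme : Even m) (g : ℝ → ℝ)
    (hg : ∀ x, g x = (1 / ((m : ℝ) / 2 + 1)) *
      (2 * x + 1 - 2 * Real.sqrt (x * (x + 1)) *
        Real.cos (2 * Real.sqrt Real.pi * (Real.sqrt (x + 1) - Real.sqrt x)))) :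
    Filter.Tendsto g Filter.atTop (nhds (Real.pi / ((m : ℝ) / 2 + 1))) := by
  have hπ : (0:ℝ) < Real.pi := Real.pi_pos
  set a : ℝ := 2 * Real.sqrt Real.pi with ha
  have hsqπ : Real.sqrt Real.pi ^ 2 = Real.pi := Real.sq_sqrt hπ.le
  have hapos : 0 < a := by
    have : 0 < Real.sqrt Real.pi := Real.sqrt_pos.2 hπ
    positivity
  set c : ℝ := 1 / ((m : ℝ) / 2 + 1) with hc
  set H : ℝ → ℝ := fun y =>
    (1 - Real.cos (a * y)) / (2 * y ^ 2) + y ^ 2 / 2 * (1 + Real.cos (a * y)) with hH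
  -- limit of H at 0 within {0}ᶜ
  have hmap : Tendsto (fun y : ℝ => a * y / 2) (𝓝[≠] (0:ℝ)) (𝓝[≠] (0:ℝ)) := by
    rw [tendsto_nhdsWithin_iff]
    constructor
    · have : Tendsto (fun y : ℝ => a * y / 2) (𝓝 0) (𝓝 (a * 0 / 2)) := by
        exact ((continuous_const.mul continuous_id).div_const 2).tendsto 0
      simpa using this.mono_left nhdsWithin_le_nhds
    · filter_upwards [self_mem_nhdsWithin] with y hy
      have hy' : y ≠ 0 := hy
      simp only [Set.mem_compl_iff, Set.mem_singleton_iff]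
      positivity
  have h1 : Tendsto (fun y : ℝ => Real.sin (a * y / 2) / (a * y / 2)) (𝓝[≠] (0:ℝ))
      (𝓝 1) := sin_div_self_lim.comp hmap
  have h2 : Tendsto (fun y : ℝ => Real.pi * (Real.sin (a * y / 2) / (a * y / 2)) ^ 2)
      (𝓝[≠] (0:ℝ)) (𝓝 Real.pi) := by
    simpa using ((h1.pow 2).const_mul Real.pi)
  have hcosid : ∀ y : ℝ, Real.cos (a * y) = 1 - 2 * Real.sin (a * y / 2) ^ 2 := by
    intro y
    have : a * y = 2 * (a * y / 2) := by ring
    rw [this, Real.cos_two_mul', Real.cos_sq']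
    ring
  have hH1 : Tendsto (fun y : ℝ => (1 - Real.cos (a * y)) / (2 * y ^ 2)) (𝓝[≠] (0:ℝ))
      (𝓝 Real.pi) := by
    apply h2.congr'
    filter_upwards [self_mem_nhdsWithin] with y hy
    have hy0 : y ≠ 0 := hy
    rw [hcosid y]
    have ha2 : a ^ 2 = 4 * Real.pi := by
      rw [ha]; rw [mul_pow, hsqπ]; norm_num
    have hu : (a * y / 2) ^ 2 = Real.pi * y ^ 2 := by
      have h4 : (a * y / 2) ^ 2 = a ^ 2 * y ^ 2 / 4 := by ring
      rw [h4, ha2]; ring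
    rw [div_pow, hu]
    have hy2 : y ^ 2 ≠ 0 := pow_ne_zero _ hy0
    field_simp
    ring
  have hH2 : Tendsto (fun y : ℝ => y ^ 2 / 2 * (1 + Real.cos (a * y))) (𝓝[≠] (0:ℝ))
      (𝓝 0) := by
    have hcont : Tendsto (fun y : ℝ => y ^ 2 / 2 * (1 + Real.cos (a * y))) (𝓝 (0:ℝ))
        (𝓝 ((0:ℝ) ^ 2 / 2 * (1 + Real.cos (a * 0)))) := by
      apply Tendsto.mul
      · exact ((continuous_pow 2).tendsto 0).div_const 2
      · exact (continuous_const.add (Real.continuous_cos.comp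
          (continuous_const.mul continuous_id))).tendsto 0
    simpa using hcont.mono_left nhdsWithin_le_nhds
  have hHlim : Tendsto H (𝓝[≠] (0:ℝ)) (𝓝 Real.pi) := by
    have := hH1.add hH2
    simpa using this
  -- the substitution y = √(x+1) - √x
  set δ : ℝ → ℝ := fun x => Real.sqrt (x + 1) - Real.sqrt x with hδdef
  have hδeq : δ =ᶠ[atTop] fun x => (Real.sqrt (x + 1) + Real.sqrt x)⁻¹ := by
    filter_upwards [eventually_ge_atTop (0:ℝ)] with x hx
    have h1 : Real.sqrt x < Real.sqrt (x + 1) := by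
      apply Real.sqrt_lt_sqrt hx; linarith
    have hpos : 0 < Real.sqrt (x + 1) + Real.sqrt x := by
      have := Real.sqrt_nonneg x
      nlinarith [Real.sqrt_nonneg (x+1), Real.sqrt_pos.2 (show (0:ℝ) < x + 1 by linarith)]
    have key : δ x * (Real.sqrt (x + 1) + Real.sqrt x) = 1 := by
      have e1 : Real.sqrt (x+1) ^ 2 = x + 1 := Real.sq_sqrt (by linarith)
      have e2 : Real.sqrt x ^ 2 = x := Real.sq_sqrt hx
      simp only [hδdef]
      nlinarith [e1, e2]
    field_simp at key ⊢
    linarith [key]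
  have hδ0 : Tendsto δ atTop (𝓝 0) := by
    have hsum : Tendsto (fun x : ℝ => Real.sqrt (x + 1) + Real.sqrt x) atTop atTop := by
      refine tendsto_atTop_mono (fun x => ?_) sqrt_tendsto_atTop
      have := Real.sqrt_nonneg (x + 1)
      linarith
    exact Tendsto.congr' hδeq.symm hsum.inv_tendsto_atTop
  have hδne : Tendsto δ atTop (𝓝[≠] (0:ℝ)) := by
    rw [tendsto_nhdsWithin_iff]
    refine ⟨hδ0, ?_⟩
    filter_upwards [eventually_ge_atTop (0:ℝ)] with x hx
    have h1 : Real.sqrt x < Real.sqrt (x + 1) := by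
      apply Real.sqrt_lt_sqrt hx; linarith
    simp only [Set.mem_compl_iff, Set.mem_singleton_iff, hδdef]
    intro hcon
    nlinarith
  have hcomp : Tendsto (fun x => c * H (δ x)) atTop (𝓝 (c * Real.pi)) :=
    (hHlim.comp hδne).const_mul c
  have hmc : ((m : ℝ) / 2 + 1) ≠ 0 := by positivity
  have hfinal : c * Real.pi = Real.pi / ((m : ℝ) / 2 + 1) := by
    rw [hc]; field_simp
  rw [← hfinal]
  apply hcomp.congr'
  filter_upwards [eventually_ge_atTop (0:ℝ)] with x hx
  have h1 : Real.sqrt x < Real.sqrt (x + 1) := by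
    apply Real.sqrt_lt_sqrt hx; linarith
  have hy : 0 < δ x := by simp only [hδdef]; linarith
  have hy0 : δ x ≠ 0 := ne_of_gt hy
  have e1 : Real.sqrt (x+1) ^ 2 = x + 1 := Real.sq_sqrt (by linarith)
  have e2 : Real.sqrt x ^ 2 = x := Real.sq_sqrt hx
  have es : Real.sqrt (x * (x + 1)) = Real.sqrt x * Real.sqrt (x + 1) :=
    Real.sqrt_mul hx (x + 1)
  set s : ℝ := Real.sqrt (x * (x + 1)) with hs
  have hA : δ x ^ 2 = 2 * x + 1 - 2 * s := by
    simp only [hδdef, hs, es]; nlinarith [e1, e2]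
  have hs2 : s ^ 2 = x * (x + 1) := Real.sq_sqrt (by nlinarith)
  have hAB : (2 * x + 1 - 2 * s) * (2 * x + 1 + 2 * s) = 1 := by nlinarith [hs2]
  have hApos : 0 < 2 * x + 1 - 2 * s := by rw [← hA]; positivity
  have hgx := hg x
  rw [hgx, hH]
  simp only
  rw [hA]
  have harg : a * δ x = 2 * Real.sqrt Real.pi * (Real.sqrt (x + 1) - Real.sqrt x) := by
    rw [ha, hδdef]
  rw [harg]
  set C := Real.cos (2 * Real.sqrt Real.pi * (Real.sqrt (x + 1) - Real.sqrt x))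
  have hAne : (2 * x + 1 - 2 * s) ≠ 0 := ne_of_gt hApos
  have key : (1 - C) / (2 * (2 * x + 1 - 2 * s)) + (2 * x + 1 - 2 * s) / 2 * (1 + C)
      = 2 * x + 1 - 2 * s * C := by
    have hAinv : (2 * x + 1 - 2 * s)⁻¹ = 2 * x + 1 + 2 * s :=
      inv_eq_of_mul_eq_one_right hAB
    rw [div_eq_mul_inv, mul_inv, hAinv]
    ring
  rw [key]
end

section
/- With g(x) = (1/(m/2+1))·[2x+1 − 2√(x(x+1))·cos(2√π(√(x+1) − √x))] for m a positive even integer, g is monotonically increasing on [1,∞), and consequently g(x) < π/(m/2+1) for all x ∈ [1,∞). -/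
/-!
Put `u = √(x + 1) - √x = (√(x + 1) + √x)⁻¹`, which decreases from `√2 - 1` to `0` on
`[1, ∞)`, and `θ = √π u`. Writing `2x + 1 = (√x)² + (√(x + 1))²` and expanding `cos (2θ)`,
`2x + 1 - 2√(x(x + 1)) cos (2θ) = u² cos² θ + sin² θ / u² = π sinc² θ + u² cos² θ`.
As a function of `u` this is continuous with value `π` at `0`, and its derivative
`(2 / u³) (u⁴ cos θ (cos θ - θ sin θ) - sin θ (sin θ - θ cos θ))` is negative for `0 < θ < 1`:
there the Taylor bounds for `sin` and `cos` give `sin θ (sin θ - θ cos θ) ≥ 5θ⁴/24`, while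
`u⁴ = θ⁴/π² ≤ θ⁴/9`. So `g` increases with `x` and stays below its limit `π / (m/2 + 1)`.
-/

open Real Set

noncomputable def spiralGap (u : ℝ) : ℝ :=
  π * sinc (√π * u) ^ 2 + u ^ 2 * cos (√π * u) ^ 2

lemma continuous_spiralGap : Continuous spiralGap := by
  unfold spiralGap
  fun_prop

lemma spiralGap_zero : spiralGap 0 = π := by
  simp [spiralGap]

lemma spiralGap_of_ne_zero {u : ℝ} (hu : u ≠ 0) :
    spiralGap u = sin (√π * u) ^ 2 / u ^ 2 + u ^ 2 * cos (√π * u) ^ 2 := by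
  have hπ : √π ≠ 0 := (sqrt_pos.2 pi_pos).ne'
  rw [spiralGap, sinc_of_ne_zero (mul_ne_zero hπ hu), div_pow, mul_pow, sq_sqrt pi_pos.le]
  field_simp

lemma sq_add_sq_sub_two_mul_mul_cos_two_mul (a b θ : ℝ) :
    a ^ 2 + b ^ 2 - 2 * a * b * cos (2 * θ) =
      (b - a) ^ 2 * cos θ ^ 2 + (b + a) ^ 2 * sin θ ^ 2 := by
  rw [cos_two_mul]
  linear_combination -(a + b) ^ 2 * sin_sq_add_cos_sq θ

lemma sqrt_add_one_sub_sqrt_eq_inv {x : ℝ} (hx : 0 ≤ x) :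
    √(x + 1) - √x = (√(x + 1) + √x)⁻¹ := by
  refine eq_inv_of_mul_eq_one_left ?_
  linear_combination sq_sqrt (by linarith : 0 ≤ x + 1) - sq_sqrt hx

lemma two_mul_add_one_sub_eq_spiralGap {x : ℝ} (hx : 0 ≤ x) :
    2 * x + 1 - 2 * √(x * (x + 1)) * cos (2 * √π * (√(x + 1) - √x)) =
      spiralGap (√(x + 1) - √x) := by
  set u := √(x + 1) - √x with hu_def
  have hu : u = (√(x + 1) + √x)⁻¹ := sqrt_add_one_sub_sqrt_eq_inv hx
  have hu0 : u ≠ 0 := by rw [hu]; positivity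
  clear_value u
  have key := sq_add_sq_sub_two_mul_mul_cos_two_mul (√x) (√(x + 1)) (√π * u)
  rw [sq_sqrt hx, sq_sqrt (by linarith), ← hu_def, ← inv_inv (√(x + 1) + √x), ← hu] at key
  rw [spiralGap_of_ne_zero hu0, sqrt_mul hx, mul_assoc 2 √π]
  linear_combination key

lemma strictAntiOn_sqrt_add_one_sub_sqrt :
    StrictAntiOn (fun x ↦ √(x + 1) - √x) (Ici 0) := by
  intro x hx y hy hxy
  simp only [sqrt_add_one_sub_sqrt_eq_inv hx, sqrt_add_one_sub_sqrt_eq_inv hy]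
  have hx0 : 0 ≤ x := hx
  apply inv_strictAnti₀ (by positivity)
  exact add_lt_add_of_lt_of_le (sqrt_lt_sqrt (by linarith) (by linarith)) (sqrt_le_sqrt hxy.le)

lemma sqrt_add_one_sub_sqrt_mem_Ioc {x : ℝ} (hx : 1 ≤ x) :
    √(x + 1) - √x ∈ Ioc 0 (√π)⁻¹ := by
  rw [sqrt_add_one_sub_sqrt_eq_inv (by linarith)]
  refine ⟨by positivity, inv_anti₀ (sqrt_pos.2 pi_pos) ?_⟩
  have hπ : √π < 2 := (sqrt_lt' (by norm_num)).2 (by linarith [pi_lt_four])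
  have h1 : 1 ≤ √(x + 1) := one_le_sqrt.2 (by linarith)
  have h2 : 1 ≤ √x := one_le_sqrt.2 hx
  linarith

lemma sin_sub_mul_cos_ge {t : ℝ} (ht0 : 0 ≤ t) (ht1 : t ≤ 1) :
    t ^ 3 / 4 ≤ sin t - t * cos t := by
  have hsin := sin_ge_sub_cube ht0
  have hcos := (abs_le.1 (cos_bound (x := t) (by rwa [abs_of_nonneg ht0]))).2
  rw [abs_of_nonneg ht0] at hcos
  have ht5 : t ^ 5 ≤ t ^ 3 := pow_le_pow_of_le_one ht0 ht1 (by norm_num)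
  nlinarith [mul_le_mul_of_nonneg_left hcos ht0]

lemma mul_cos_mul_cos_sub_lt_sin_mul_sin_sub {t v : ℝ} (ht0 : 0 < t) (ht1 : t ≤ 1)
    (hv : 0 ≤ v) (hvt : 9 * v ≤ t ^ 4) :
    v * cos t * (cos t - t * sin t) < sin t * (sin t - t * cos t) := by
  have hsin : 5 / 6 * t ≤ sin t := by
    nlinarith [sin_ge_sub_cube ht0.le, pow_le_one₀ ht0.le ht1 (n := 2)]
  have hcos0 : 0 ≤ cos t :=
    cos_nonneg_of_mem_Icc ⟨by linarith [pi_gt_three], by linarith [pi_gt_three]⟩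
  have hcos1 : cos t ≤ 1 := cos_le_one t
  have hleft : v * cos t * (cos t - t * sin t) ≤ t ^ 4 / 9 := by
    have hcos_sq : cos t ^ 2 ≤ 1 := by nlinarith
    nlinarith [mul_nonneg (mul_nonneg hv hcos0) (mul_nonneg ht0.le (by linarith : 0 ≤ sin t)),
      mul_le_mul_of_nonneg_left hcos_sq hv]
  have hright : 5 / 24 * t ^ 4 ≤ sin t * (sin t - t * cos t) := by
    have := sin_sub_mul_cos_ge ht0.le ht1
    nlinarith [mul_le_mul hsin this (by positivity) (by linarith)]
  nlinarith [pow_pos ht0 4]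

lemma hasDerivAt_spiralGap {u : ℝ} (hu : u ≠ 0) :
    HasDerivAt spiralGap (2 / u ^ 3 *
      (u ^ 4 * cos (√π * u) * (cos (√π * u) - √π * u * sin (√π * u)) -
        sin (√π * u) * (sin (√π * u) - √π * u * cos (√π * u)))) u := by
  have hlin : HasDerivAt (fun v ↦ √π * v) √π u := by
    simpa using (hasDerivAt_id u).const_mul √π
  have hsin := ((hasDerivAt_sin _).comp u hlin).pow 2
  have hcos := ((hasDerivAt_cos _).comp u hlin).pow 2
  have hsq := hasDerivAt_pow 2 u
  have hformula := (hsin.div hsq (pow_ne_zero 2 hu)).add (hsq.mul hcos)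
  have heq : spiralGap =ᶠ[nhds u]
      fun v ↦ sin (√π * v) ^ 2 / v ^ 2 + v ^ 2 * cos (√π * v) ^ 2 :=
    (eventually_ne_nhds hu).mono fun v hv ↦ spiralGap_of_ne_zero hv
  refine (hformula.congr_of_eventuallyEq heq).congr_deriv ?_
  simp only [Function.comp_apply, Pi.pow_apply]
  field_simp
  ring

lemma strictAntiOn_spiralGap : StrictAntiOn spiralGap (Icc 0 (√π)⁻¹) := by
  have hπ : 0 < √π := sqrt_pos.2 pi_pos
  refine strictAntiOn_of_deriv_neg (convex_Icc _ _) continuous_spiralGap.continuousOn ?_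
  rw [interior_Icc]
  rintro u ⟨hu0, hu1⟩
  rw [(hasDerivAt_spiralGap hu0.ne').deriv]
  have ht0 : 0 < √π * u := by positivity
  have ht1 : √π * u ≤ 1 := by
    have := mul_lt_mul_of_pos_left hu1 hπ
    rw [mul_inv_cancel₀ hπ.ne'] at this
    exact this.le
  have hvt : 9 * u ^ 4 ≤ (√π * u) ^ 4 := by
    rw [mul_pow, show √π ^ 4 = π ^ 2 by rw [show 4 = 2 * 2 by rfl, pow_mul, sq_sqrt pi_pos.le]]
    have hπ9 : 9 ≤ π ^ 2 := by nlinarith [pi_gt_three]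
    exact mul_le_mul_of_nonneg_right hπ9 (by positivity)
  have := mul_cos_mul_cos_sub_lt_sin_mul_sin_sub ht0 ht1 (by positivity) hvt
  exact mul_neg_of_pos_of_neg (by positivity) (sub_neg.2 this)

lemma spiralGap_lt_pi {u : ℝ} (hu0 : 0 < u) (hu : u ≤ (√π)⁻¹) : spiralGap u < π :=
  spiralGap_zero ▸ strictAntiOn_spiralGap ⟨le_rfl, by positivity⟩ ⟨hu0.le, hu⟩ hu0

theorem spiral_gap_monotone_general (m : ℕ) (g : ℝ → ℝ)
    (hg : ∀ x, g x = (1 / ((m : ℝ) / 2 + 1)) *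
      (2 * x + 1 - 2 * Real.sqrt (x * (x + 1)) *
        Real.cos (2 * Real.sqrt Real.pi * (Real.sqrt (x + 1) - Real.sqrt x)))) :
    StrictMonoOn g (Set.Ici 1) ∧
      ∀ x : ℝ, 1 ≤ x → g x < Real.pi / ((m : ℝ) / 2 + 1) := by
  have hc : 0 < 1 / ((m : ℝ) / 2 + 1) := by positivity
  have hg_eq : ∀ x : ℝ, 1 ≤ x → g x = 1 / ((m : ℝ) / 2 + 1) * spiralGap (√(x + 1) - √x) :=
    fun x hx ↦ by rw [hg, two_mul_add_one_sub_eq_spiralGap (by linarith)]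
  refine ⟨fun x (hx : 1 ≤ x) y (hy : 1 ≤ y) hxy ↦ ?_, fun x hx ↦ ?_⟩
  · have hu :=
      strictAntiOn_sqrt_add_one_sub_sqrt (zero_le_one.trans hx) (zero_le_one.trans hy) hxy
    rw [hg_eq x hx, hg_eq y hy]
    exact mul_lt_mul_of_pos_left (strictAntiOn_spiralGap
      (Ioc_subset_Icc_self (sqrt_add_one_sub_sqrt_mem_Ioc hy))
      (Ioc_subset_Icc_self (sqrt_add_one_sub_sqrt_mem_Ioc hx)) hu) hc
  · obtain ⟨hu0, hu1⟩ := sqrt_add_one_sub_sqrt_mem_Ioc hx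
    rw [hg_eq x hx, div_eq_mul_one_div π, mul_comm π]
    exact mul_lt_mul_of_pos_left (spiralGap_lt_pi hu0 hu1) hc

/-- `g` is monotonically increasing on `[1,∞)` and consequently
`g(x) < π/(m/2+1)` for all `x ≥ 1`. -/
theorem spiral_gap_monotone (m : ℕ) (hm : 0 < m) (hme : Even m) (g : ℝ → ℝ)
    (hg : ∀ x, g x = (1 / ((m : ℝ) / 2 + 1)) *
      (2 * x + 1 - 2 * Real.sqrt (x * (x + 1)) *
        Real.cos (2 * Real.sqrt Real.pi * (Real.sqrt (x + 1) - Real.sqrt x)))) :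
    StrictMonoOn g (Set.Ici 1) ∧
      ∀ x : ℝ, 1 ≤ x → g x < Real.pi / ((m : ℝ) / 2 + 1) :=
  spiral_gap_monotone_general m g hg
end

section
/- For an even integer m > 0 and k ∈ {1,...,m/2 − 1}, with θ_k = 2√(πk), r_k = √(k/(m/2+1)), and p_k = r_k e^{iθ_k}, the distance between successive spiral poles satisfies |p_k − p_{k+1}| < 2πc_m, where c_m = 1/(2√(π(m+2)/2)). -/
/-!
After scaling by `√(m/2 + 1)` the poles are `√k e^{2i√(πk)}`. With `a = √k`, `b = √(k+1)`
and `s = b - a = 1/(a+b)`, the law of cosines gives the squared distance `s² + 4ab sin²(√π s)`.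
Since `4ab ≤ (a+b)² = 1/s²` and `√π s ≤ 1`, the quartic Taylor correction
`sin² x ≤ x² - x⁴/9` bounds it by `π + s² - π² s²/9`, which is `< π` because `π² > 9`.
-/

open Real Complex

theorem Real.sin_sq_le_sq_sub_pow_four_div_nine {x : ℝ} (hx₀ : 0 ≤ x) (hx₁ : x ≤ 1) :
    Real.sin x ^ 2 ≤ x ^ 2 - x ^ 4 / 9 := by
  have hsin_nonneg : 0 ≤ Real.sin x :=
    sin_nonneg_of_nonneg_of_le_pi hx₀ (hx₁.trans (by linarith [pi_gt_three]))
  have hsin_le : Real.sin x ≤ x - x ^ 3 / 6 + x ^ 5 / 100 := by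
    have := (abs_le.1 (Real.sin_bound (by rwa [abs_of_nonneg hx₀]))).2
    rw [abs_of_nonneg hx₀] at this
    linarith
  have hx2 : x ^ 2 ≤ 1 := pow_le_one₀ hx₀ hx₁
  calc Real.sin x ^ 2 ≤ (x - x ^ 3 / 6 + x ^ 5 / 100) ^ 2 :=
        pow_le_pow_left₀ hsin_nonneg hsin_le 2
    _ ≤ x ^ 2 - x ^ 4 / 9 := by
      nlinarith [pow_nonneg hx₀ 4, mul_nonneg (pow_nonneg hx₀ 4) (sub_nonneg.2 hx2),
        mul_nonneg (pow_nonneg hx₀ 6) (sub_nonneg.2 hx2)]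

theorem Complex.norm_ofReal_mul_exp_sub_ofReal_mul_exp_sq (r₁ r₂ θ₁ θ₂ : ℝ) :
    ‖(r₁ : ℂ) * exp (I * θ₁) - r₂ * exp (I * θ₂)‖ ^ 2
      = r₁ ^ 2 + r₂ ^ 2 - 2 * r₁ * r₂ * Real.cos (θ₂ - θ₁) := by
  rw [mul_comm I, mul_comm I, exp_mul_I, exp_mul_I, ← ofReal_cos, ← ofReal_sin, ← ofReal_cos,
    ← ofReal_sin, Complex.sq_norm, normSq_apply]
  simp only [sub_re, sub_im, mul_re, mul_im, add_re, add_im, ofReal_re, ofReal_im, I_re, I_im]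
  rw [Real.cos_sub]
  linear_combination
    r₁ ^ 2 * Real.sin_sq_add_cos_sq θ₁ + r₂ ^ 2 * Real.sin_sq_add_cos_sq θ₂

theorem sq_add_sq_sub_mul_cos_lt_pi {a b : ℝ} (ha : 1 ≤ a) (hb : 0 ≤ b)
    (hab : b ^ 2 = a ^ 2 + 1) :
    a ^ 2 + b ^ 2 - 2 * a * b * Real.cos (2 * (√π * (b - a))) < π := by
  set s := b - a
  have hs_mul : s * (a + b) = 1 := by linear_combination hab
  have hb1 : 1 ≤ b := by nlinarith
  have hs_pos : 0 < s := pos_of_mul_pos_left (hs_mul ▸ one_pos) (by linarith)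
  have hs_half : s ≤ 1 / 2 := by nlinarith
  have hsqrt_pi : √π ≤ 2 := (sqrt_le_left zero_le_two).2 (by linarith [pi_lt_four])
  have hsin := Real.sin_sq_le_sq_sub_pow_four_div_nine (x := √π * s) (by positivity)
    (by nlinarith [sqrt_nonneg π])
  have hsq : (√π * s) ^ 2 = π * s ^ 2 := by rw [mul_pow, sq_sqrt pi_pos.le]
  have hamgm : 4 * a * b ≤ (a + b) ^ 2 := by nlinarith [sq_nonneg (a - b)]
  calc a ^ 2 + b ^ 2 - 2 * a * b * Real.cos (2 * (√π * s))
      = s ^ 2 + 4 * a * b * Real.sin (√π * s) ^ 2 := by rw [Real.cos_two_mul_eq_one_sub]; ring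
    _ ≤ s ^ 2 + (a + b) ^ 2 * (π * s ^ 2 - π ^ 2 * s ^ 4 / 9) := by
      rw [show (√π * s) ^ 4 = ((√π * s) ^ 2) ^ 2 by ring, hsq] at hsin
      gcongr
      linarith
    _ = π + s ^ 2 - π ^ 2 * s ^ 2 / 9 := by
      linear_combination (π - π ^ 2 * s ^ 2 / 9) * (s * (a + b) + 1) * hs_mul
    _ < π := by
      have hpi_sq : 9 < π ^ 2 := by nlinarith [pi_gt_three]
      nlinarith [mul_pos (pow_pos hs_pos 2) (sub_pos.2 hpi_sq)]

theorem norm_sqrt_mul_exp_sub_lt_sqrt_pi {k : ℝ} (hk : 1 ≤ k) :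
    ‖((√k : ℝ) : ℂ) * exp (I * ((2 * √(π * k) : ℝ) : ℂ))
        - ((√(k + 1) : ℝ) : ℂ) * exp (I * ((2 * √(π * (k + 1)) : ℝ) : ℂ))‖
      < √π := by
  rw [lt_sqrt (norm_nonneg _), norm_ofReal_mul_exp_sub_ofReal_mul_exp_sq,
    sq_sqrt (by linarith), sq_sqrt (by linarith), sqrt_mul pi_pos.le, sqrt_mul pi_pos.le,
    show 2 * (√π * √(k + 1)) - 2 * (√π * √k) = 2 * (√π * (√(k + 1) - √k)) by ring]
  have h := sq_add_sq_sub_mul_cos_lt_pi (one_le_sqrt.2 hk) (sqrt_nonneg (k + 1))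
    (by rw [sq_sqrt (by linarith), sq_sqrt (by linarith)])
  rwa [sq_sqrt (by linarith), sq_sqrt (by linarith)] at h

theorem successive_pole_distance_general (m : ℕ) (k : ℕ)
    (hk1 : 1 ≤ k) :
    ‖
        (((Real.sqrt ((k : ℝ) / ((m : ℝ) / 2 + 1)) : ℝ) : ℂ) *
            Complex.exp (Complex.I * ((2 * Real.sqrt (Real.pi * k) : ℝ) : ℂ))
          - ((Real.sqrt (((k : ℝ) + 1) / ((m : ℝ) / 2 + 1)) : ℝ) : ℂ) *
            Complex.exp (Complex.I * ((2 * Real.sqrt (Real.pi * ((k : ℝ) + 1)) : ℝ) : ℂ)))‖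
      < 2 * Real.pi * (1 / (2 * Real.sqrt (Real.pi * ((m : ℝ) + 2) / 2))) := by
  set N : ℝ := (m : ℝ) / 2 + 1
  have hN : 0 < √N := sqrt_pos.2 (by positivity)
  have hrhs : 2 * π * (1 / (2 * √(π * ((m : ℝ) + 2) / 2))) = √π / √N := by
    rw [show π * ((m : ℝ) + 2) / 2 = π * N by ring, sqrt_mul pi_pos.le]
    field_simp
    rw [sq_sqrt pi_pos.le]
  rw [hrhs, sqrt_div (Nat.cast_nonneg k), sqrt_div (by positivity), ofReal_div, ofReal_div,
    div_mul_eq_mul_div, div_mul_eq_mul_div, ← sub_div, norm_div, norm_real, norm_of_nonneg hN.le]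
  exact div_lt_div_of_pos_right (norm_sqrt_mul_exp_sub_lt_sqrt_pi (by exact_mod_cast hk1)) hN

/-- successive spiral poles `p_k = r_k e^{iθ_k}`, `θ_k = 2√(πk)`,
`r_k = √(k/(m/2+1))`, satisfy `|p_k − p_{k+1}| < 2πc_m` for
`k ∈ {1,...,m/2−1}`, with `c_m = 1/(2√(π(m+2)/2))`. -/
theorem successive_pole_distance (m : ℕ) (hm : 0 < m) (hme : Even m) (k : ℕ)
    (hk1 : 1 ≤ k) (hk2 : k ≤ m / 2 - 1) :
    ‖
        (((Real.sqrt ((k : ℝ) / ((m : ℝ) / 2 + 1)) : ℝ) : ℂ) *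
            Complex.exp (Complex.I * ((2 * Real.sqrt (Real.pi * k) : ℝ) : ℂ))
          - ((Real.sqrt (((k : ℝ) + 1) / ((m : ℝ) / 2 + 1)) : ℝ) : ℂ) *
            Complex.exp (Complex.I * ((2 * Real.sqrt (Real.pi * ((k : ℝ) + 1)) : ℝ) : ℂ)))‖
      < 2 * Real.pi * (1 / (2 * Real.sqrt (Real.pi * ((m : ℝ) + 2) / 2))) :=
  successive_pole_distance_general m k hk1
end

section
/- For an even integer m > 0, select the poles p_k = r_k e^{iθ_k}, k ∈ {1,...,m/2}, with θ_k = 2√(πk), r_k = √(k/(m/2+1)), along the Archimedes spiral r = c_mθ with c_m = 1/(2√(π(m+2)/2)). Then for any z in the open unit disk, there exists k ∈ {1,...,m/2} such that |z − p_k| < 4πc_m and either |p_k| ≤ |z| or k = 1. -/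
/-!
Write `z = ρ e^{iφ}` and take the branch `θ ≡ φ (mod 2π)` with `cθ ≤ ρ < cθ + 2πc`; then the
spiral point `w = cθ e^{iθ}` satisfies `z - w = (ρ - cθ) e^{iθ}`, so `‖z - w‖ < 2πc`.
Consecutive pole angles `t < s` satisfy `s² - t² = 4π`, and by the law of cosines every chord of
the spiral between angles `0 ≤ t ≤ s` with `s² - t² ≤ 4π` has length at most `2πc`. Joining `w`
to the last pole before it (to the first pole if `0 ≤ θ < 2√π`) and using the triangle inequality
gives `4πc`; if `θ < 0` then `ρ < 2πc` and `z` is directly close to the first pole.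
-/

section

open Real

lemma one_sub_cos_le_of_sq_le_four {x : ℝ} (hx : x ^ 2 ≤ 4) :
    1 - cos x ≤ x ^ 2 / 2 - 7 * x ^ 4 / 384 := by
  set y := x / 2 with hy
  have hy1 : y ^ 2 ≤ 1 := by rw [hy, div_pow]; linarith
  have hcos : 1 - y ^ 2 / 2 - y ^ 4 * (5 / 96) ≤ cos y := by
    have := (abs_le.1 (cos_bound (sq_le_one_iff_abs_le_one y |>.1 hy1))).1
    rw [Even.pow_abs (by decide)] at this
    linarith
  have hcos0 : 0 ≤ 1 - y ^ 2 / 2 - y ^ 4 * (5 / 96) := by nlinarith [sq_nonneg y]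
  have hdouble : cos x = 2 * cos y ^ 2 - 1 := by
    rw [← cos_two_mul, hy, mul_div_cancel₀ x two_ne_zero]
  have hsq := pow_le_pow_left₀ hcos0 hcos 2
  rw [hdouble, show x = 2 * y by rw [hy]; ring]
  nlinarith [pow_two_nonneg (y ^ 3), pow_two_nonneg (y ^ 4)]

lemma one_sub_cos_mul_le {x : ℝ} (hx : x ^ 2 ≤ 4 * π) :
    (1 - cos x) * (16 * π ^ 2 - x ^ 4) ≤ 2 * x ^ 2 * (4 * π ^ 2 - x ^ 2) := by
  have hπ := pi_gt_three
  have hx4 : 0 ≤ 16 * π ^ 2 - x ^ 4 := by nlinarith [sq_nonneg x]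
  rcases le_total (x ^ 2) 4 with hsmall | hlarge
  · have hbracket : 2 - 7 * π ^ 2 / 24 - x ^ 2 / 2 + 7 * x ^ 4 / 384 ≤ 0 := by
      nlinarith [sq_nonneg x]
    calc (1 - cos x) * (16 * π ^ 2 - x ^ 4)
          ≤ (x ^ 2 / 2 - 7 * x ^ 4 / 384) * (16 * π ^ 2 - x ^ 4) :=
          mul_le_mul_of_nonneg_right (one_sub_cos_le_of_sq_le_four hsmall) hx4
      _ ≤ 2 * x ^ 2 * (4 * π ^ 2 - x ^ 2) := by
          nlinarith [mul_nonpos_of_nonneg_of_nonpos (pow_two_nonneg (x ^ 2)) hbracket]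
  · calc (1 - cos x) * (16 * π ^ 2 - x ^ 4) ≤ x ^ 2 / 2 * (16 * π ^ 2 - x ^ 4) := by
          gcongr; linarith [one_sub_sq_div_two_le_cos (x := x)]
      _ ≤ 2 * x ^ 2 * (4 * π ^ 2 - x ^ 2) := by
          nlinarith [mul_nonneg (pow_two_nonneg (x ^ 2)) (sub_nonneg.2 hlarge)]

/-- `(s - t)² + 2st(1 - cos (s - t))` is `‖c s e^{is} - c t e^{it}‖² / c²`. Since
`(s + t)(s - t) ≤ 4π` bounds `st` in terms of `s - t`, this reduces to `one_sub_cos_mul_le`. -/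
lemma sub_sq_add_two_mul_mul_one_sub_cos_le {s t : ℝ} (ht : 0 ≤ t) (hts : t ≤ s)
    (h : s ^ 2 - t ^ 2 ≤ 4 * π) :
    (s - t) ^ 2 + 2 * s * t * (1 - cos (s - t)) ≤ (2 * π) ^ 2 := by
  set x := s - t with hx
  have hx0 : 0 ≤ x := sub_nonneg.2 hts
  have hprod : x * (s + t) ≤ 4 * π := by rw [hx]; linarith
  have hxsq : x ^ 2 ≤ 4 * π := by nlinarith
  have hst : 4 * s * t * x ^ 2 ≤ 16 * π ^ 2 - x ^ 4 := by
    have : (x * (s + t)) ^ 2 ≤ (4 * π) ^ 2 :=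
      pow_le_pow_left₀ (mul_nonneg hx0 (by linarith)) hprod 2
    have hsum : (s + t) ^ 2 = 4 * s * t + x ^ 2 := by rw [hx]; ring
    nlinarith
  have hcos : 0 ≤ 1 - cos x := sub_nonneg.2 (cos_le_one x)
  rcases hx0.eq_or_lt with hx0 | hxpos
  · simp [← hx0]; positivity
  · have hx2 : 0 < 2 * x ^ 2 := by positivity
    refine le_of_mul_le_mul_left ?_ hx2
    calc 2 * x ^ 2 * (x ^ 2 + 2 * s * t * (1 - cos x))
        = 2 * x ^ 4 + (4 * s * t * x ^ 2) * (1 - cos x) := by ring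
      _ ≤ 2 * x ^ 4 + (16 * π ^ 2 - x ^ 4) * (1 - cos x) := by gcongr
      _ ≤ 2 * x ^ 4 + 2 * x ^ 2 * (4 * π ^ 2 - x ^ 2) := by
          linarith [one_sub_cos_mul_le hxsq]
      _ = 2 * x ^ 2 * (2 * π) ^ 2 := by ring

end

open Complex
open scoped Real

noncomputable def archimedesSpiral (c θ : ℝ) : ℂ := ((c * θ : ℝ) : ℂ) * exp (I * (θ : ℂ))

lemma norm_archimedesSpiral (c θ : ℝ) : ‖archimedesSpiral c θ‖ = |c * θ| := by
  rw [archimedesSpiral, norm_mul, norm_exp_I_mul_ofReal, mul_one, norm_real, Real.norm_eq_abs]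

lemma norm_archimedesSpiral_sub_sq (c s t : ℝ) :
    ‖archimedesSpiral c s - archimedesSpiral c t‖ ^ 2 =
      c ^ 2 * ((s - t) ^ 2 + 2 * s * t * (1 - Real.cos (s - t))) := by
  simp only [archimedesSpiral, Complex.sq_norm, mul_comm I, exp_mul_I, ← ofReal_cos, ← ofReal_sin,
    normSq_apply, sub_re, sub_im, mul_re, mul_im, add_re, add_im, ofReal_re, ofReal_im, I_re, I_im]
  rw [Real.cos_sub]
  linear_combination (c * s) ^ 2 * Real.sin_sq_add_cos_sq s + (c * t) ^ 2 * Real.sin_sq_add_cos_sq t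

lemma norm_archimedesSpiral_sub_le {c s t : ℝ} (hc : 0 ≤ c) (ht : 0 ≤ t) (hts : t ≤ s)
    (h : s ^ 2 - t ^ 2 ≤ 4 * π) :
    ‖archimedesSpiral c s - archimedesSpiral c t‖ ≤ 2 * π * c := by
  refine (pow_le_pow_iff_left₀ (norm_nonneg _) (by positivity) two_ne_zero).1 ?_
  rw [norm_archimedesSpiral_sub_sq, mul_pow, mul_comm]
  exact mul_le_mul_of_nonneg_right (sub_sq_add_two_mul_mul_one_sub_cos_le ht hts h) (sq_nonneg c)

lemma exists_mem_Ioc_norm_mul_exp_eq (z : ℂ) (a : ℝ) :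
    ∃ θ ∈ Set.Ioc a (a + 2 * π), (‖z‖ : ℂ) * exp (I * θ) = z := by
  refine ⟨toIocMod Real.two_pi_pos a (arg z), toIocMod_mem_Ioc _ _ _, ?_⟩
  have harg := toIocMod_add_toIocDiv_zsmul Real.two_pi_pos a (arg z)
  set n := toIocDiv Real.two_pi_pos a (arg z)
  conv_rhs => rw [← norm_mul_exp_arg_mul_I z, ← harg]
  push_cast
  rw [zsmul_eq_mul, add_mul, exp_add, mul_assoc (n : ℂ), exp_int_mul_two_pi_mul_I, mul_one,
    mul_comm I]

lemma exists_archimedesSpiral_near {c : ℝ} (hc : 0 < c) (z : ℂ) :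
    ∃ θ : ℝ, c * θ ≤ ‖z‖ ∧ ‖z‖ < c * θ + 2 * π * c ∧
      ‖z - archimedesSpiral c θ‖ = ‖z‖ - c * θ := by
  obtain ⟨θ, ⟨hlo, hhi⟩, hz⟩ := exists_mem_Ioc_norm_mul_exp_eq z (‖z‖ / c - 2 * π)
  have hθz : c * θ ≤ ‖z‖ := by rw [← le_div_iff₀' hc]; linarith
  refine ⟨θ, hθz, ?_, ?_⟩
  · rw [sub_lt_iff_lt_add, div_lt_iff₀' hc] at hlo; linarith
  · conv_lhs => rw [← hz]
    rw [archimedesSpiral, ← sub_mul, ← ofReal_sub, norm_mul, norm_exp_I_mul_ofReal, mul_one,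
      norm_real, Real.norm_eq_abs, abs_of_nonneg (sub_nonneg.2 hθz)]

lemma exists_two_sqrt_pi_mul_le_lt {θ : ℝ} (hθ : 0 ≤ θ) :
    ∃ k : ℕ, 2 * √(π * k) ≤ θ ∧ θ ^ 2 < 4 * π * (k + 1) := by
  have h4π : 0 < 4 * π := by positivity
  refine ⟨⌊θ ^ 2 / (4 * π)⌋₊, ?_, ?_⟩
  · have hfloor := Nat.floor_le (div_nonneg (sq_nonneg θ) h4π.le)
    rw [le_div_iff₀' h4π] at hfloor
    refine (pow_le_pow_iff_left₀ (by positivity) hθ two_ne_zero).1 ?_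
    rw [mul_pow, Real.sq_sqrt (by positivity)]
    linarith
  · have hfloor := Nat.lt_floor_add_one (θ ^ 2 / (4 * π))
    rwa [div_lt_iff₀' h4π] at hfloor

lemma exists_archimedesSpiral_pole_near {c : ℝ} (hc : 0 < c) (z : ℂ) :
    ∃ k : ℕ, 1 ≤ k ∧ ‖z - archimedesSpiral c (2 * √(π * k))‖ < 4 * π * c ∧
      (c * (2 * √(π * k)) ≤ ‖z‖ ∨ k = 1) := by
  obtain ⟨θ, hθz, hzθ, hdist⟩ := exists_archimedesSpiral_near hc z
  have hzw : ‖z - archimedesSpiral c θ‖ < 2 * π * c := by rw [hdist]; linarith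
  have hπ : 1 ≤ π := by linarith [Real.pi_gt_three]
  have hsqrtπ : √π ^ 2 = π := Real.sq_sqrt Real.pi_pos.le
  rcases lt_or_ge θ 0 with hneg | hθ0
  · refine ⟨1, le_rfl, ?_, Or.inr rfl⟩
    have hpole : ‖archimedesSpiral c (2 * √(π * (1 : ℕ)))‖ ≤ 2 * π * c := by
      rw [norm_archimedesSpiral, Nat.cast_one, mul_one, abs_of_nonneg (by positivity)]
      nlinarith [Real.sqrt_le_self_iff.2 (Or.inr hπ)]
    calc _ ≤ ‖z‖ + ‖archimedesSpiral c (2 * √(π * (1 : ℕ)))‖ := norm_sub_le _ _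
      _ < 2 * π * c + 2 * π * c := by nlinarith
      _ = 4 * π * c := by ring
  rcases lt_or_ge θ (2 * √π) with hsmall | hlarge
  · refine ⟨1, le_rfl, ?_, Or.inr rfl⟩
    have hchord := norm_archimedesSpiral_sub_le hc.le hθ0 (s := 2 * √(π * (1 : ℕ)))
      (by simpa using hsmall.le) (by rw [Nat.cast_one, mul_one]; nlinarith)
    calc _ ≤ ‖z - archimedesSpiral c θ‖ + ‖archimedesSpiral c θ - archimedesSpiral c _‖ :=
          norm_sub_le_norm_sub_add_norm_sub _ _ _
      _ < 2 * π * c + 2 * π * c := by rw [norm_sub_rev (archimedesSpiral c θ)]; linarith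
      _ = 4 * π * c := by ring
  · obtain ⟨k, hkθ, hθk⟩ := exists_two_sqrt_pi_mul_le_lt hθ0
    have hk : 1 ≤ k := by
      have h4π : (2 * √π) ^ 2 ≤ θ ^ 2 := pow_le_pow_left₀ (by positivity) hlarge 2
      rw [mul_pow, hsqrtπ] at h4π
      refine Nat.one_le_iff_ne_zero.2 fun hk0 => ?_
      rw [hk0, Nat.cast_zero, zero_add, mul_one] at hθk
      linarith
    have hsq : (2 * √(π * k)) ^ 2 = 4 * π * k := by
      rw [mul_pow, Real.sq_sqrt (by positivity)]; ring
    refine ⟨k, hk, ?_, Or.inl (le_trans (by gcongr) hθz)⟩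
    have hchord := norm_archimedesSpiral_sub_le hc.le (by positivity) hkθ (by linarith)
    calc _ ≤ ‖z - archimedesSpiral c θ‖ + ‖archimedesSpiral c θ - archimedesSpiral c _‖ :=
          norm_sub_le_norm_sub_add_norm_sub _ _ _
      _ < 2 * π * c + 2 * π * c := by linarith
      _ = 4 * π * c := by ring

lemma archimedesSpiral_two_sqrt_pi_mul (K : ℝ) {L : ℝ} (hL : 0 ≤ L) :
    archimedesSpiral (1 / (2 * √(π * L))) (2 * √(π * K)) =
      ((√(K / L) : ℝ) : ℂ) * exp (I * ((2 * √(π * K) : ℝ) : ℂ)) := by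
  rw [archimedesSpiral, Real.sqrt_div' K hL, Real.sqrt_mul Real.pi_pos.le,
    Real.sqrt_mul Real.pi_pos.le]
  congr 2
  rcases hL.eq_or_lt with rfl | hL
  · simp
  · field_simp [(Real.sqrt_pos.2 hL).ne']

/-- for the Archimedes spiral pole selection
`p_k = r_k e^{iθ_k}`, `k ∈ {1,...,m/2}`, with `θ_k = 2√(πk)`,
`r_k = √(k/(m/2+1))`, every `z` in the open unit disk admits a pole `p_k` with
`|z − p_k| < 4πc_m` and either `|p_k| ≤ |z|` or `k = 1`,
where `c_m = 1/(2√(π(m+2)/2))`. -/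
theorem pole_selection_covering (m : ℕ) (hm : 0 < m) (hme : Even m)
    (z : ℂ) (hz : ‖z‖ < 1) :
    ∃ k ∈ Finset.Icc 1 (m / 2),
      ‖z - ((Real.sqrt ((k : ℝ) / ((m : ℝ) / 2 + 1)) : ℝ) : ℂ) *
            Complex.exp (Complex.I * ((2 * Real.sqrt (Real.pi * k) : ℝ) : ℂ))‖
          < 4 * Real.pi * (1 / (2 * Real.sqrt (Real.pi * ((m : ℝ) + 2) / 2))) ∧
        (‖((Real.sqrt ((k : ℝ) / ((m : ℝ) / 2 + 1)) : ℝ) : ℂ) *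
              Complex.exp (Complex.I * ((2 * Real.sqrt (Real.pi * k) : ℝ) : ℂ))‖
            ≤ ‖z‖ ∨ k = 1) := by
  obtain ⟨n, rfl⟩ := hme
  set L : ℝ := ((n + n : ℕ) : ℝ) / 2 + 1
  have hL : L = n + 1 := by push_cast [L]; ring
  set c := 1 / (2 * √(π * L))
  have hc : 0 < c := by positivity
  have hconst : π * ((n + n : ℕ) + 2) / 2 = π * L := by rw [hL]; push_cast; ring
  simp only [hconst, ← archimedesSpiral_two_sqrt_pi_mul _ (by positivity : 0 ≤ L)]
  obtain ⟨k, hk, hdist, hnorm⟩ := exists_archimedesSpiral_pole_near hc z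
  refine ⟨k, Finset.mem_Icc.2 ⟨hk, ?_⟩, hdist, ?_⟩
  · rcases hnorm with hkz | rfl
    · have hone : c * (2 * √(π * L)) = 1 := by rw [one_div_mul_cancel (by positivity)]
      have hsqrt : √(π * k) < √(π * L) := by nlinarith
      have hkL := (Real.sqrt_lt_sqrt_iff (by positivity)).1 hsqrt
      rw [hL] at hkL
      have : k < n + 1 := by exact_mod_cast (mul_lt_mul_iff_right₀ Real.pi_pos).1 hkL
      omega
    · omega
  · rwa [norm_archimedesSpiral, abs_of_nonneg (by positivity)]
end

section
/- For the spiral pole selection with θ₁ = 2√π, if p = c_m θ̂ e^{iθ̂} is a spiral point with 0 ≤ θ̂ < θ₁ and p₁ = c_mθ₁e^{iθ₁}, then |p − p₁| < 2πc_m. -/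
/-!
Go from `p` to `p₁` first along the circle of radius `cθ̂` (an arc of length `cθ̂(θ₁ - θ̂)`) and
then radially (length `c(θ₁ - θ̂)`). The total `c(θ̂ + 1)(θ₁ - θ̂)` is at most `c((θ₁ + 1)/2)²` by
AM-GM, and `(√π + 1/2)² < 2π`.
-/

open Complex

lemma norm_exp_I_mul_sub_exp_I_mul_le (x y : ℝ) :
    ‖exp (I * x) - exp (I * y)‖ ≤ |x - y| := by
  have hfactor : exp (I * x) - exp (I * y) = exp (I * y) * (exp (I * ↑(x - y)) - 1) := by
    rw [mul_sub, mul_one, ← exp_add]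
    push_cast
    ring_nf
  rw [hfactor, norm_mul, norm_exp_I_mul_ofReal, one_mul]
  exact Real.norm_exp_I_mul_ofReal_sub_one_le

lemma norm_polar_sub_polar_le {r s : ℝ} (hr : 0 ≤ r) (x y : ℝ) :
    ‖(r : ℂ) * exp (I * x) - (s : ℂ) * exp (I * y)‖ ≤ r * |x - y| + |r - s| := by
  have hsplit : (r : ℂ) * exp (I * x) - (s : ℂ) * exp (I * y)
      = (r : ℂ) * (exp (I * x) - exp (I * y)) + ((r - s : ℝ) : ℂ) * exp (I * y) := by
    push_cast
    ring
  calc ‖(r : ℂ) * exp (I * x) - (s : ℂ) * exp (I * y)‖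
      ≤ ‖(r : ℂ) * (exp (I * x) - exp (I * y))‖ + ‖((r - s : ℝ) : ℂ) * exp (I * y)‖ :=
        hsplit ▸ norm_add_le _ _
    _ ≤ r * |x - y| + |r - s| := by
        rw [norm_mul, norm_mul, norm_exp_I_mul_ofReal, mul_one, norm_real,
          norm_real, Real.norm_of_nonneg hr, Real.norm_eq_abs]
        gcongr
        exact norm_exp_I_mul_sub_exp_I_mul_le x y

lemma two_sqrt_pi_add_one_div_two_sq_lt : ((2 * Real.sqrt Real.pi + 1) / 2) ^ 2 < 2 * Real.pi := by
  have hsq : Real.sqrt Real.pi ^ 2 = Real.pi := Real.sq_sqrt Real.pi_pos.le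
  nlinarith [Real.sqrt_nonneg Real.pi, Real.pi_gt_three]

/-- any spiral point `p = cθ̂e^{iθ̂}` with `0 ≤ θ̂ < θ₁ = 2√π` is
within `2πc` of the first pole `p₁ = cθ₁e^{iθ₁}`. -/
theorem spiral_initial_segment (c θh : ℝ) (hc : 0 < c) (h0 : 0 ≤ θh)
    (h1 : θh < 2 * Real.sqrt Real.pi) :
    ‖((c * θh : ℝ) : ℂ) * Complex.exp (Complex.I * (θh : ℝ))
        - ((c * (2 * Real.sqrt Real.pi) : ℝ) : ℂ) *
            Complex.exp (Complex.I * ((2 * Real.sqrt Real.pi : ℝ) : ℂ))‖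
      < 2 * Real.pi * c := by
  set t := 2 * Real.sqrt Real.pi
  have hangle : |θh - t| = t - θh := by rw [abs_sub_comm, abs_of_pos (by linarith)]
  have hradius : |c * θh - c * t| = c * (t - θh) := by
    rw [← mul_sub, abs_mul, abs_of_pos hc, abs_sub_comm, abs_of_pos (by linarith)]
  calc _ ≤ c * θh * |θh - t| + |c * θh - c * t| :=
        norm_polar_sub_polar_le (mul_nonneg hc.le h0) θh t
    _ = c * ((θh + 1) * (t - θh)) := by rw [hangle, hradius]; ring
    _ ≤ c * ((t + 1) / 2) ^ 2 := by
        gcongr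
        nlinarith [sq_nonneg (2 * θh + 1 - t)]
    _ < 2 * Real.pi * c := by
        rw [mul_comm _ c]
        exact mul_lt_mul_of_pos_left two_sqrt_pi_add_one_div_two_sq_lt hc
end
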